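/- If G is a unicyclic graph with n ≥ 4 vertices and 1 ≤ p ≤ n-3 pendant vertices, and a > 1 or 0 < a ≤ e^{-1}, then with m = ⌊(2n-p)/(n-p)⌋ and t = 2n - p - m(n-p): t(m+1)a^{m+1} + (n-p-t)m·a^m + pa ≤ SEI_a(G) ≤ (p+2)a^{p+2} + 2(n-p-1)a² + pa. -/

import Mathlib

/-!
The `p` pendant vertices contribute `p a`; the other `n - p` degrees are integers `≥ 2` with sum
`2n - p`. The map `x ↦ x a^x = x e^{x log a}` has second derivative `log a (2 + x log a) a^x`, so it
is convex on `[2, ∞)` when `log a ≥ 0` or `log a ≤ -1`. For a convex `f`, every integer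
point of the graph of `f` lies above the line through `(m, f m)` and `(m + 1, f (m + 1))`, so the
balanced sequence (values `m` and `m + 1` only) minimises `∑ f (d i)`; and every degree lies in
`[2, p + 2]`, hence below the chord over that interval, so `p + 2` once and `2` otherwise
maximises it.
-/

open Finset SimpleGraph

/-- A unicyclic graph: connected with as many edges as vertices. -/
def IsUnicyclic {n : ℕ} (G : SimpleGraph (Fin n)) [DecidableRel G.Adj] : Prop :=
  G.Connected ∧ G.edgeFinset.card = n

/-- The graph `U_n^3`: a triangle on vertices 0,1,2 with n-3 pendant edges attached to 0. -/
def unicyclicStar (n : ℕ) : SimpleGraph (Fin n) :=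
  SimpleGraph.fromRel (fun i j => i.val = 0 ∨ (i.val = 1 ∧ j.val = 2))

open Real in
theorem convexOn_mul_exp_mul {L : ℝ} (hL : 0 ≤ L ∨ L ≤ -1) :
    ConvexOn ℝ (Set.Ici 2) fun x : ℝ => x * exp (L * x) := by
  refine convexOn_of_hasDerivWithinAt2_nonneg (convex_Ici 2) (by fun_prop)
    (f' := fun x => (1 + L * x) * exp (L * x)) (f'' := fun x => L * (2 + L * x) * exp (L * x))
    (fun x _ => ?_) (fun x _ => ?_) (fun x hx => ?_)
  · have hexp := ((hasDerivAt_id x).const_mul L).exp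
    exact (((hasDerivAt_id x).mul hexp).congr_deriv (by simp; ring)).hasDerivWithinAt
  · have hexp := ((hasDerivAt_id x).const_mul L).exp
    have hlin := ((hasDerivAt_id x).const_mul L).const_add 1
    exact ((hlin.mul hexp).congr_deriv (by simp; ring)).hasDerivWithinAt
  · rw [interior_Ici, Set.mem_Ioi] at hx
    have : 0 ≤ L * (2 + L * x) := by
      rcases hL with hL | hL
      · exact mul_nonneg hL (by nlinarith)
      · exact mul_nonneg_of_nonpos_of_nonpos (by linarith) (by nlinarith)
    positivity

theorem convexOn_mul_rpow {a : ℝ} (ha : 1 ≤ a ∨ 0 < a ∧ a ≤ Real.exp (-1)) :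
    ConvexOn ℝ (Set.Ici 2) fun x : ℝ => x * a ^ x := by
  have ha₀ : 0 < a := by
    rcases ha with ha | ha
    · linarith
    · exact ha.1
  have hL : 0 ≤ Real.log a ∨ Real.log a ≤ -1 := by
    refine ha.imp Real.log_nonneg fun ha => ?_
    simpa using Real.log_le_log ha.1 ha.2
  simpa only [Real.rpow_def_of_pos ha₀] using convexOn_mul_exp_mul hL

section Chord

variable {s : Set ℝ} {f : ℝ → ℝ} {x y z : ℝ}

theorem ConvexOn.sub_mul_le_add_mul (hf : ConvexOn ℝ s f) (hy : y ∈ s) (hz : z ∈ s)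
    (hyx : y ≤ x) (hxz : x ≤ z) : (z - y) * f x ≤ (z - x) * f y + (x - y) * f z := by
  rcases hyx.eq_or_lt with rfl | hyx
  · linarith
  rcases hxz.eq_or_lt with rfl | hxz
  · linarith
  exact hf.secant_mono_aux1 hy hz hyx hxz

theorem ConvexOn.add_mul_le_sub_mul (hf : ConvexOn ℝ s f) (hx : x ∈ s) (hy : y ∈ s) (hz : z ∈ s)
    (hyz : y < z) (hxyz : x ≤ y ∨ z ≤ x) : (z - x) * f y + (x - y) * f z ≤ (z - y) * f x := by
  rcases hxyz with hxy | hzx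
  · rcases hxy.eq_or_lt with rfl | hxy
    · linarith
    linarith [hf.secant_mono_aux1 hx hz hxy hyz]
  · rcases hzx.eq_or_lt with rfl | hzx
    · linarith
    linarith [hf.secant_mono_aux1 hy hx hyz hzx]

variable {ι : Type*} {t : Finset ι} {v : ι → ℝ}

theorem ConvexOn.sub_mul_sum_le (hf : ConvexOn ℝ s f) (hy : y ∈ s) (hz : z ∈ s)
    (hv : ∀ i ∈ t, y ≤ v i ∧ v i ≤ z) :
    (z - y) * ∑ i ∈ t, f (v i) ≤ (z * #t - ∑ i ∈ t, v i) * f y + (∑ i ∈ t, v i - y * #t) * f z :=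
  calc _ ≤ ∑ i ∈ t, ((z - v i) * f y + (v i - y) * f z) := by
          rw [mul_sum]
          exact sum_le_sum fun i hi => hf.sub_mul_le_add_mul hy hz (hv i hi).1 (hv i hi).2
    _ = _ := by
          simp only [sum_add_distrib, ← sum_mul, sum_sub_distrib, sum_const, nsmul_eq_mul]
          ring

theorem ConvexOn.le_sub_mul_sum (hf : ConvexOn ℝ s f) (hy : y ∈ s) (hz : z ∈ s) (hyz : y < z)
    (hv : ∀ i ∈ t, v i ∈ s ∧ (v i ≤ y ∨ z ≤ v i)) :
    (z * #t - ∑ i ∈ t, v i) * f y + (∑ i ∈ t, v i - y * #t) * f z ≤ (z - y) * ∑ i ∈ t, f (v i) :=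
  calc _ = ∑ i ∈ t, ((z - v i) * f y + (v i - y) * f z) := by
          simp only [sum_add_distrib, ← sum_mul, sum_sub_distrib, sum_const, nsmul_eq_mul]
          ring
    _ ≤ _ := by
          rw [mul_sum]
          exact sum_le_sum fun i hi => hf.add_mul_le_sub_mul (hv i hi).1 hy hz hyz (hv i hi).2

end Chord

section DegreeSequences

variable {ι : Type*} {s : Finset ι} {d : ι → ℕ} {f : ℝ → ℝ}

theorem Finset.add_card_sub_one_mul_le_sum [DecidableEq ι] {c : ℕ} (hc : ∀ i ∈ s, c ≤ d i)
    {i : ι} (hi : i ∈ s) : d i + (#s - 1) * c ≤ ∑ j ∈ s, d j := by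
  have hrest : #(s.erase i) • c ≤ ∑ j ∈ s.erase i, d j :=
    card_nsmul_le_sum _ _ _ fun j hj => hc j (mem_of_mem_erase hj)
  rw [card_erase_of_mem hi, smul_eq_mul] at hrest
  rw [← add_sum_erase s d hi]
  omega

theorem ConvexOn.balanced_le_sum {c : ℕ} (hf : ConvexOn ℝ (Set.Ici (c : ℝ)) f)
    (hd : ∀ i ∈ s, c ≤ d i) {m r : ℕ} (hm : m = (∑ i ∈ s, d i) / #s)
    (hr : r = ∑ i ∈ s, d i - m * #s) :
    r * f ↑(m + 1) + (#s - r) * f m ≤ ∑ i ∈ s, f (d i) := by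
  rcases s.eq_empty_or_nonempty with rfl | hs
  · simp [hr]
  have hcm : c ≤ m := by
    rw [hm, Nat.le_div_iff_mul_le hs.card_pos, mul_comm, ← smul_eq_mul]
    exact card_nsmul_le_sum s d c hd
  have hr' : (r : ℝ) = ∑ i ∈ s, (d i : ℝ) - m * #s := by
    rw [hr, Nat.cast_sub (hm ▸ Nat.div_mul_le_self _ _)]
    push_cast
    ring
  have hjensen := hf.le_sub_mul_sum (t := s) (v := fun i => (d i : ℝ)) (y := m) (z := ↑(m + 1))
    (by simpa using hcm) (Set.mem_Ici.2 (by exact_mod_cast hcm.trans m.le_succ)) (by simp)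
    fun i hi => ⟨by simpa using hd i hi,
      (le_or_gt (d i) m).imp (by exact_mod_cast ·) (by exact_mod_cast ·)⟩
  push_cast at hjensen ⊢
  rw [hr']
  linear_combination hjensen

theorem ConvexOn.sum_le_extremal_of_sum_eq {q : ℕ} (hf : ConvexOn ℝ (Set.Icc (2 : ℝ) ↑(q + 2)) f)
    (hq : 0 < q) (hd : ∀ i ∈ s, 2 ≤ d i) (hsum : ∑ i ∈ s, d i = 2 * #s + q) :
    ∑ i ∈ s, f (d i) ≤ f ↑(q + 2) + (#s - 1) * f 2 := by
  classical
  have hdq (i) (hi : i ∈ s) : d i ≤ q + 2 := by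
    have := add_card_sub_one_mul_le_sum hd hi
    have := card_pos.2 ⟨i, hi⟩
    omega
  have hchord := hf.sub_mul_sum_le (t := s) (v := fun i => (d i : ℝ)) (y := 2) (z := ↑(q + 2))
    (by simp) (by simp) fun i hi => ⟨by exact_mod_cast hd i hi, by exact_mod_cast hdq i hi⟩
  have hsum' : ∑ i ∈ s, (d i : ℝ) = 2 * #s + q := by exact_mod_cast hsum
  rw [hsum'] at hchord
  push_cast at hchord ⊢
  refine le_of_mul_le_mul_left ?_ (by exact_mod_cast hq : (0 : ℝ) < q)
  linear_combination hchord

end DegreeSequences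

namespace SimpleGraph

variable {V : Type*} [Fintype V] (G : SimpleGraph V) [DecidableRel G.Adj]

theorem sum_comp_degree_eq {M : Type*} [AddCommMonoid M] (g : ℕ → M) :
    ∑ u, g (G.degree u) = #(univ.filter fun u => G.degree u = 1) • g 1
      + ∑ u ∈ univ.filter (fun u => ¬ G.degree u = 1), g (G.degree u) := by
  rw [← sum_filter_add_sum_filter_not univ (fun u => G.degree u = 1),
    sum_congr rfl fun u hu => by rw [(mem_filter.1 hu).2], sum_const]

theorem sum_degree_filter_ne_one_add_card :
    ∑ u ∈ univ.filter (fun u => ¬ G.degree u = 1), G.degree u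
      + #(univ.filter fun u => G.degree u = 1) = 2 * #G.edgeFinset := by
  rw [← G.sum_degrees_eq_twice_card_edges,
    ← sum_filter_not_add_sum_filter univ (fun u => G.degree u = 1), card_eq_sum_ones]
  congr 1
  exact sum_congr rfl fun u hu => (mem_filter.1 hu).2.symm

end SimpleGraph

theorem stmt19_general {n p : ℕ} (G : SimpleGraph (Fin n)) [DecidableRel G.Adj]
    (hG : IsUnicyclic G) (hp1 : 1 ≤ p) (hp2 : p ≤ n - 3)
    (hp : (Finset.univ.filter (fun u : Fin n => G.degree u = 1)).card = p)
    (a : ℝ) (ha : 1 < a ∨ (0 < a ∧ a ≤ Real.exp (-1)))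
    (m t : ℕ) (hm : m = (2 * n - p) / (n - p)) (ht : t = 2 * n - p - m * (n - p)) :
    (t : ℝ) * (m + 1) * a ^ (m + 1) + ((n : ℝ) - p - t) * m * a ^ m + (p : ℝ) * a ≤
      ∑ u : Fin n, (G.degree u : ℝ) * a ^ (G.degree u) ∧
    ∑ u : Fin n, (G.degree u : ℝ) * a ^ (G.degree u) ≤
      ((p : ℝ) + 2) * a ^ (p + 2) + 2 * ((n : ℝ) - p - 1) * a ^ 2 + (p : ℝ) * a := by
  obtain ⟨hconn, hedge⟩ := hG
  have : Nontrivial (Fin n) := Fin.nontrivial_iff_two_le.2 (by omega)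
  rw [G.sum_comp_degree_eq (fun k : ℕ => (k : ℝ) * a ^ k), hp]
  set R := univ.filter fun u : Fin n => ¬ G.degree u = 1
  have hRcard : #R = n - p := by
    have := card_filter_add_card_filter_not (s := univ) (fun u : Fin n => G.degree u = 1)
    rw [hp, card_univ, Fintype.card_fin] at this
    exact Nat.eq_sub_of_add_eq' this
  have hRsum : ∑ u ∈ R, G.degree u = 2 * n - p := by
    have := G.sum_degree_filter_ne_one_add_card
    rw [hp, hedge] at this
    exact Nat.eq_sub_of_add_eq this
  have hR2 (u) (hu : u ∈ R) : 2 ≤ G.degree u := by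
    have := hconn.preconnected.degree_pos_of_nontrivial u
    have := (mem_filter.1 hu).2
    omega
  have hf := convexOn_mul_rpow (ha.imp le_of_lt id)
  have hlow := ConvexOn.balanced_le_sum (c := 2) (m := m) (r := t) (by exact_mod_cast hf)
    hR2 (by rwa [hRsum, hRcard]) (by rwa [hRsum, hRcard])
  have hup := (hf.subset Set.Icc_subset_Ici_self (convex_Icc _ _)).sum_le_extremal_of_sum_eq hp1 hR2
    (by rw [hRsum, hRcard]; omega)
  simp only [Real.rpow_natCast, Real.rpow_ofNat] at hlow hup
  rw [hRcard, Nat.cast_sub (by omega)] at hlow hup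
  push_cast at hlow hup ⊢
  simp only [nsmul_eq_mul, one_mul, pow_one]
  constructor <;> linarith

theorem stmt19 {n p : ℕ} (hn : 4 ≤ n) (G : SimpleGraph (Fin n)) [DecidableRel G.Adj]
    (hG : IsUnicyclic G) (hp1 : 1 ≤ p) (hp2 : p ≤ n - 3)
    (hp : (Finset.univ.filter (fun u : Fin n => G.degree u = 1)).card = p)
    (a : ℝ) (ha : 1 < a ∨ (0 < a ∧ a ≤ Real.exp (-1)))
    (m t : ℕ) (hm : m = (2 * n - p) / (n - p)) (ht : t = 2 * n - p - m * (n - p)) :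
    (t : ℝ) * (m + 1) * a ^ (m + 1) + ((n : ℝ) - p - t) * m * a ^ m + (p : ℝ) * a ≤
      ∑ u : Fin n, (G.degree u : ℝ) * a ^ (G.degree u) ∧
    ∑ u : Fin n, (G.degree u : ℝ) * a ^ (G.degree u) ≤
      ((p : ℝ) + 2) * a ^ (p + 2) + 2 * ((n : ℝ) - p - 1) * a ^ 2 + (p : ℝ) * a :=
  stmt19_general G hG hp1 hp2 hp a ha m t hm ht
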